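/- Let d ≥ 2, ε ∈ (0,1) small enough, p₀ ∈ P₀, and C := 2/(min_{e∈V} p₀(e))². Suppose the i.i.d. environment law ℙ satisfies ℙ(Ω_{p₀,ε}) = 1 and λ := 𝔼[d(0,ω)·e₁] > Cε². Then Kalikow's criterion holds: for every g : V → [0,1] with Σ_{e∈V} g(e) > 0, one has 𝔼[ (d(0,ω)·e₁) / (Σ_{e∈V} ω(0,e) g(e)) ] ≥ (1/(2d)) (λ − Cε²) > 0; in particular the infimum over all such g of this expectation is strictly positive. -/

import Mathlib

/-!
Write `D` for the drift along `e₁` at the origin, `S = ∑ₑ ω(0,e) g(e)`, `G = ∑ₑ g(e)` and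
`κ = min p₀`. On `Ω_{p₀,ε}`, `D` stays within `2ε` of `p₀(e₁) - p₀(-e₁)` and `S` stays in
`[L, U]` with `L = ∑ₑ (p₀(e) - ε) g(e) ≥ (κ - ε) G` and `U - L = 2εG`. Writing
`𝔼[D/S] = 𝔼[D] 𝔼[1/S] + Cov(D, 1/S)` and bounding the covariance by the oscillations of `D`
and `1/S` gives `𝔼[D/S] ≥ (λ - 4ε²G/L)/U`. Because `2dκ ≤ ∑ p₀ = 1` we have `κ ≤ 1/4`, so for
`ε < κ/2` the error `4ε²G/L ≤ 4ε²/(κ - ε)` is at most `2ε²/κ²`; and `U ≤ 1 + 2dε ≤ 2d`.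
-/

open MeasureTheory Filter

namespace RWRE

/-- A site of the lattice `ℤ^d`. -/
abbrev Site (d : ℕ) := Fin d → ℤ

/-- The set `V` of nearest-neighbor jumps: the `2d` signed unit vectors of `ℤ^d`,
i.e. the vectors of `ℓ¹`-norm one. -/
noncomputable def V (d : ℕ) : Finset (Site d) :=
  Finset.image (fun p : Fin d × Bool =>
    (fun j => if j = p.1 then (if p.2 then 1 else -1) else 0 : Site d)) Finset.univ

theorem V_nonempty {d : ℕ} (hd : 0 < d) : (V d).Nonempty :=
  ⟨_, Finset.mem_image.mpr ⟨(⟨0, hd⟩, true), Finset.mem_univ _, rfl⟩⟩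

/-- An environment: for each site `x` and jump `e`, a transition probability `ω x e`. -/
abbrev Env (d : ℕ) := Site d → Site d → ℝ

/-- `ω` is a genuine environment: at each site the jump probabilities form an element of `𝒫`. -/
def IsEnv {d : ℕ} (ω : Env d) : Prop :=
  ∀ x : Site d, (∀ e, 0 ≤ ω x e ∧ ω x e ≤ 1) ∧ (∑ e ∈ V d, ω x e = 1) ∧
    (∀ e ∉ V d, ω x e = 0)

/-- `p ∈ 𝒫`. -/
def IsProbVec {d : ℕ} (p : Site d → ℝ) : Prop :=
  (∀ e, 0 ≤ p e ∧ p e ≤ 1) ∧ (∑ e ∈ V d, p e = 1) ∧ (∀ e ∉ V d, p e = 0)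

/-- `p ∈ 𝒫₀`, i.e. `min_{e ∈ V} p e > 0`. -/
def IsPosProbVec {d : ℕ} (p : Site d → ℝ) : Prop :=
  IsProbVec p ∧ ∀ e ∈ V d, 0 < p e

/-- `ω ∈ Ω_{p₀,ε}`. -/
def InOmegaEps {d : ℕ} (p₀ : Site d → ℝ) (ε : ℝ) (ω : Env d) : Prop :=
  IsEnv ω ∧ ∀ x : Site d, ∀ e ∈ V d, |ω x e - p₀ e| ≤ ε

/-- The local drift `d(x,ω) = ∑_{e ∈ V} e ω(x,e) ∈ ℝ^d`. -/
noncomputable def drift {d : ℕ} (ω : Env d) (x : Site d) : Fin d → ℝ :=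
  fun i => ∑ e ∈ V d, ω x e * (e i : ℝ)

/-- The first standard basis vector `e₁` of `ℤ^d`. -/
def e1 (d : ℕ) : Site d := fun j => if (j : ℕ) = 0 then 1 else 0

/-- Inner product of a lattice vector with a lattice vector. -/
noncomputable def dotZ {d : ℕ} (x y : Site d) : ℝ := ∑ i, (x i : ℝ) * (y i : ℝ)

/-- Inner product of a real vector with a lattice vector. -/
noncomputable def dotR {d : ℕ} (v : Fin d → ℝ) (y : Site d) : ℝ := ∑ i, v i * (y i : ℝ)

/-- Under `ℙ` the coordinates `{ω x : x ∈ ℤ^d}` are i.i.d. -/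
def IsIID {d : ℕ} (ℙ : Measure (Env d)) : Prop :=
  ProbabilityTheory.iIndepFun
      (fun x (ω : Env d) => ω x) ℙ ∧
  ∀ x : Site d, ℙ.map (fun ω => ω x) = ℙ.map (fun ω => ω 0)

/-- `P` is the quenched law `P_{x₀,ω}` of the random walk in the environment `ω` started at
`x₀`: a probability measure on paths whose finite-dimensional cylinder probabilities are the
products of the transition probabilities of the walk. -/
def IsQuenched {d : ℕ} (ω : Env d) (x₀ : Site d) (P : Measure (ℕ → Site d)) : Prop :=
  IsProbabilityMeasure P ∧
  ∀ (n : ℕ) (y : ℕ → Site d),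
    P {X | ∀ k ≤ n, X k = y k} =
      (if y 0 = x₀ then 1 else 0) *
        ∏ k ∈ Finset.range n, ENNReal.ofReal (ω (y k) (y (k + 1) - y k))

/-- Ballisticity in the direction `e₁`: `P₀ = ℙ ⊗ P_{0,ω}`-a.s.,
`liminf Xₙ·e₁/n > 0`. -/
def BallisticE1 {d : ℕ} (ℙ : Measure (Env d)) (Pq : Env d → Measure (ℕ → Site d)) : Prop :=
  ∀ᵐ ω ∂ℙ, ∀ᵐ X ∂(Pq ω),
    0 < Filter.atTop.liminf (fun n : ℕ => dotZ (X n) (e1 d) / (n : ℝ))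

/-- The space shift `t_x`. -/
def shift {d : ℕ} (x : Site d) (ω : Env d) : Env d := fun y => ω (x + y)

/-- The transition kernel `R` of the environment seen from the particle:
`R f (ω) = ∑_{e ∈ V} ω(0,e) f(t_e ω)`. -/
noncomputable def Rker {d : ℕ} (f : Env d → ℝ) (ω : Env d) : ℝ :=
  ∑ e ∈ V d, ω 0 e * f (shift e ω)

/-- `Q` is an invariant probability measure for the environmental process. -/
def IsInvariantMeasure {d : ℕ} (Q : Measure (Env d)) : Prop :=
  IsProbabilityMeasure Q ∧
  ∀ f : Env d → ℝ, Measurable f → (∃ M, ∀ ω, |f ω| ≤ M) →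
    ∫ ω, Rker f ω ∂Q = ∫ ω, f ω ∂Q

/-- `Q` is the limiting invariant measure of the environmental process `ω̄_n = t_{X_n} ω`:
it is invariant for `R` and the annealed laws of `ω̄_n` converge weakly to it. -/
def IsLimitInvariantMeasure {d : ℕ} (ℙ : Measure (Env d))
    (Pq : Env d → Measure (ℕ → Site d)) (Q : Measure (Env d)) : Prop :=
  IsInvariantMeasure Q ∧
  ∀ f : Env d → ℝ, Continuous f → (∃ M, ∀ ω, |f ω| ≤ M) →
    Tendsto (fun n : ℕ => ∫ ω, ∫ X, f (shift (X n) ω) ∂(Pq ω) ∂ℙ) atTop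
      (nhds (∫ ω, f ω ∂Q))

/-- `n`-step transition probabilities of the homogeneous random walk with jump kernel `p`. -/
noncomputable def nstep {d : ℕ} (p : Site d → ℝ) : ℕ → Site d → Site d → ℝ
  | 0 => fun x y => if x = y then 1 else 0
  | n + 1 => fun x y => ∑ e ∈ V d, p e * nstep p n (x + e) y

/-- `J_p(x) = lim_{n→∞} ∑_{k=0}^n (p_k(0,-x) - p_k(0,0))`. -/
noncomputable def J {d : ℕ} (p : Site d → ℝ) (x : Site d) : ℝ :=
  limUnder Filter.atTop (fun n : ℕ =>
    ∑ k ∈ Finset.range (n + 1), (nstep p k 0 (-x) - nstep p k 0 0))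

/-- `ξ(x,e) = (ω(x,e) - p₀(e))/ε`. -/
noncomputable def xi {d : ℕ} (p₀ : Site d → ℝ) (ε : ℝ) (ω : Env d) (x e : Site d) : ℝ :=
  (ω x e - p₀ e) / ε

/-- `𝔼[ξ(0,e)]`. -/
noncomputable def xiMean {d : ℕ} (ℙ : Measure (Env d)) (p₀ : Site d → ℝ) (ε : ℝ)
    (e : Site d) : ℝ :=
  ∫ ω, xi p₀ ε ω 0 e ∂ℙ

/-- `ξ̄(x,e) = ξ(x,e) - 𝔼[ξ(0,e)]`. -/
noncomputable def xibar {d : ℕ} (ℙ : Measure (Env d)) (p₀ : Site d → ℝ) (ε : ℝ)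
    (ω : Env d) (x e : Site d) : ℝ :=
  xi p₀ ε ω x e - xiMean ℙ p₀ ε e

/-- `p_ε(e) = p₀(e) + ε 𝔼[ξ(0,e)]`. -/
noncomputable def pEps {d : ℕ} (ℙ : Measure (Env d)) (p₀ : Site d → ℝ) (ε : ℝ)
    (e : Site d) : ℝ :=
  p₀ e + ε * xiMean ℙ p₀ ε e

/-- `p*_ε(e) = p_ε(-e)`. -/
noncomputable def pEpsStar {d : ℕ} (ℙ : Measure (Env d)) (p₀ : Site d → ℝ) (ε : ℝ)
    (e : Site d) : ℝ :=
  pEps ℙ p₀ ε (-e)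

/-- Restriction (pushforward under the coordinate projection) of a measure on `Ω` to the
sites in `B`. -/
noncomputable def restrictTo {d : ℕ} (B : Finset (Site d)) (Q : Measure (Env d)) :
    Measure (↥B → Site d → ℝ) :=
  Q.map (fun ω (z : ↥B) => ω ↑z)


/-- The jump kernel of the simple symmetric random walk: `p₀(e) = 1/(2d)` for `e ∈ V`. -/
noncomputable def pSRW (d : ℕ) : Site d → ℝ :=
  fun e => if e ∈ V d then 1 / (2 * (d : ℝ)) else 0

/-- `g_δ^ω(0,x) = E'_{0,ω}[∑_{n=0}^{τ_δ} 1_x(X_n)]`, where `τ_δ` is a geometric random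
variable of parameter `1-δ` independent of walk and environment; by Fubini this equals
`∑_n δ^n P_{0,ω}(X_n = x)`. -/
noncomputable def gdelta {d : ℕ} (Pq : Env d → Measure (ℕ → Site d)) (δ : ℝ)
    (ω : Env d) (x : Site d) : ℝ :=
  ∑' n : ℕ, δ ^ n * ((Pq ω) {X | X n = x}).toReal

/-- Embedding of `ℤ^d` into `ℝ^d`. -/
noncomputable def toRvec {d : ℕ} (x : Site d) : Fin d → ℝ := fun i => (x i : ℝ)

/-- Euclidean inner product on `ℝ^d`. -/
noncomputable def dotRR {d : ℕ} (u v : Fin d → ℝ) : ℝ := ∑ i, u i * v i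

/-- Membership in the box `B_{l,L} = R((-L,L) × (-70L³,70L³)^{d-1}) ∩ ℤ^d`,
where `R` is the rotation with `R e₁ = l`. -/
def inBox {d : ℕ} (Rrot : (Fin d → ℝ) ≃ₗ[ℝ] (Fin d → ℝ)) (L : ℝ) (x : Site d) : Prop :=
  ∀ i : Fin d,
    if (i : ℕ) = 0 then |Rrot.symm (toRvec x) i| < L
    else |Rrot.symm (toRvec x) i| < 70 * L ^ 3

/-- The exit time `T_A` of the path `X` from a set `A` of sites. -/
noncomputable def exitTime {d : ℕ} (A : Set (Site d)) (X : ℕ → Site d) : ℕ :=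
  sInf {n | X n ∉ A}

/-- The annealed probability `P₀(A) = ∫ P_{0,ω}(A) dℙ(ω)` of a path event `A`. -/
noncomputable def annealedProb {d : ℕ} (ℙ : Measure (Env d))
    (Pq : Env d → Measure (ℕ → Site d)) (A : Set (ℕ → Site d)) : ℝ :=
  ∫ ω, ((Pq ω) A).toReal ∂ℙ

end RWRE

section Covariance

open ProbabilityTheory

variable {α : Type*} [MeasurableSpace α] {μ : Measure α}

lemma memLp_of_ae_abs_sub_le [IsFiniteMeasure μ] {X : α → ℝ} {c a : ℝ} (hX : AEMeasurable X μ)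
    (h : ∀ᵐ ω ∂μ, |X ω - c| ≤ a) (p : ENNReal) : MemLp X p μ :=
  memLp_of_bounded (a := c - a) (b := c + a)
    (h.mono fun ω hω => by constructor <;> linarith [abs_le.mp hω]) hX.aestronglyMeasurable p

variable [IsProbabilityMeasure μ]

lemma abs_integral_le_of_ae_abs_le {f : α → ℝ} {C : ℝ} (h : ∀ᵐ ω ∂μ, |f ω| ≤ C) :
    |∫ ω, f ω ∂μ| ≤ C := by
  simpa using norm_integral_le_of_norm_le_const (μ := μ) (f := f) h

/-- A weak form of Grüss' inequality, which has `a * r` on the right. -/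
lemma abs_covariance_le_of_abs_sub_le {X Y : α → ℝ} {c m a r : ℝ}
    (hX : AEMeasurable X μ) (hY : AEMeasurable Y μ)
    (hXc : ∀ᵐ ω ∂μ, |X ω - c| ≤ a) (hYm : ∀ᵐ ω ∂μ, |Y ω - m| ≤ r) :
    |cov[X, Y; μ]| ≤ 2 * a * r := by
  have hX' : MemLp (fun ω => X ω - c) 2 μ :=
    memLp_of_ae_abs_sub_le (hX.sub_const c) (c := 0) (by simpa using hXc) 2
  have hY' : MemLp (fun ω => Y ω - m) 2 μ :=
    memLp_of_ae_abs_sub_le (hY.sub_const m) (c := 0) (by simpa using hYm) 2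
  have hprod : |∫ ω, (X ω - c) * (Y ω - m) ∂μ| ≤ a * r :=
    abs_integral_le_of_ae_abs_le <| (hXc.and hYm).mono fun ω ⟨h₁, h₂⟩ => by
      rw [abs_mul]; exact mul_le_mul h₁ h₂ (abs_nonneg _) ((abs_nonneg _).trans h₁)
  have hXint : |∫ ω, (X ω - c) ∂μ| ≤ a := abs_integral_le_of_ae_abs_le hXc
  have hYint : |∫ ω, (Y ω - m) ∂μ| ≤ r := abs_integral_le_of_ae_abs_le hYm
  have hcov := covariance_eq_sub hX' hY'
  rw [covariance_sub_const_left (memLp_one_iff_integrable.mp (memLp_of_ae_abs_sub_le hX hXc 1)),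
    covariance_sub_const_right (memLp_one_iff_integrable.mp (memLp_of_ae_abs_sub_le hY hYm 1))]
    at hcov
  rw [hcov]
  calc _ ≤ |∫ ω, (X ω - c) * (Y ω - m) ∂μ| + |∫ ω, (X ω - c) ∂μ| * |∫ ω, (Y ω - m) ∂μ| := by
        rw [← abs_mul]; exact abs_sub _ _
    _ ≤ a * r + a * r := by gcongr; exact (abs_nonneg _).trans hXint
    _ = 2 * a * r := by ring

lemma le_integral_div_of_ae_bounds {D S : α → ℝ} {c a L U : ℝ}
    (hD : AEMeasurable D μ) (hS : AEMeasurable S μ)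
    (hDc : ∀ᵐ ω ∂μ, |D ω - c| ≤ a) (hSLU : ∀ᵐ ω ∂μ, L ≤ S ω ∧ S ω ≤ U) (hL : 0 < L)
    (hED : 0 ≤ ∫ ω, D ω ∂μ) :
    (∫ ω, D ω ∂μ - a * (U - L) / L) / U ≤ ∫ ω, D ω / S ω ∂μ := by
  have hU : 0 < U := by
    obtain ⟨ω, hω⟩ := hSLU.exists
    linarith
  have hinv : ∀ᵐ ω ∂μ, |(S ω)⁻¹ - (L⁻¹ + U⁻¹) / 2| ≤ (L⁻¹ - U⁻¹) / 2 :=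
    hSLU.mono fun ω ⟨hLS, hSU⟩ => by
      have h₁ := inv_anti₀ hL hLS
      have h₂ := inv_anti₀ (hL.trans_le hLS) hSU
      rw [abs_le]; constructor <;> linarith
  have hS' : AEMeasurable (fun ω => (S ω)⁻¹) μ := hS.inv
  have hcov := abs_covariance_le_of_abs_sub_le hD hS' hDc hinv
  rw [covariance_eq_sub (memLp_of_ae_abs_sub_le hD hDc 2) (memLp_of_ae_abs_sub_le hS' hinv 2)]
    at hcov
  have hEinv : U⁻¹ ≤ ∫ ω, (S ω)⁻¹ ∂μ := by
    have := abs_integral_le_of_ae_abs_le hinv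
    rw [integral_sub (memLp_one_iff_integrable.mp (memLp_of_ae_abs_sub_le hS' hinv 1))
      (integrable_const _)] at this
    simp only [integral_const, probReal_univ, smul_eq_mul, one_mul] at this
    linarith [(abs_le.mp this).1]
  have hmul := mul_le_mul_of_nonneg_left hEinv hED
  simp only [Pi.mul_apply] at hcov
  have hDS : ∫ ω, D ω / S ω ∂μ = ∫ ω, D ω * (S ω)⁻¹ ∂μ := by simp only [div_eq_mul_inv]
  have key : (∫ ω, D ω ∂μ - a * (U - L) / L) / U =
      (∫ ω, D ω ∂μ) * U⁻¹ - 2 * a * ((L⁻¹ - U⁻¹) / 2) := by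
    field_simp
  rw [key, hDS]
  linarith [(abs_le.mp hcov).1]

end Covariance

namespace RWRE

def signedUnit (d : ℕ) (p : Fin d × Bool) : Site d :=
  fun j => if j = p.1 then (if p.2 then 1 else -1) else 0

lemma signedUnit_injective (d : ℕ) : Function.Injective (signedUnit d) := by
  rintro ⟨j, b⟩ ⟨j', b'⟩ h
  have hj := congrFun h j
  by_cases hjj : j = j'
  · subst hjj
    cases b <;> cases b' <;> simp_all [signedUnit]
  · cases b <;> simp [signedUnit, hjj] at hj

lemma V_eq_image (d : ℕ) : V d = Finset.univ.image (signedUnit d) := rfl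

lemma sum_V {M : Type*} [AddCommMonoid M] {d : ℕ} (f : Site d → M) :
    ∑ e ∈ V d, f e = ∑ p : Fin d × Bool, f (signedUnit d p) :=
  Finset.sum_image fun _ _ _ _ h => signedUnit_injective d h

lemma card_V (d : ℕ) : (V d).card = 2 * d := by
  rw [V_eq_image, Finset.card_image_of_injective _ (signedUnit_injective d)]
  simp [mul_comm]

lemma signedUnit_zero_true {d : ℕ} (hd : 0 < d) : signedUnit d (⟨0, hd⟩, true) = e1 d := by
  funext j
  simp [signedUnit, e1, Fin.ext_iff]

lemma signedUnit_zero_false {d : ℕ} (hd : 0 < d) : signedUnit d (⟨0, hd⟩, false) = -e1 d := by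
  funext j
  simp only [signedUnit, e1, Fin.ext_iff, Pi.neg_apply]
  split_ifs <;> simp_all

lemma e1_mem_V {d : ℕ} (hd : 0 < d) : e1 d ∈ V d :=
  signedUnit_zero_true hd ▸ Finset.mem_image_of_mem _ (Finset.mem_univ _)

lemma neg_e1_mem_V {d : ℕ} (hd : 0 < d) : -e1 d ∈ V d :=
  signedUnit_zero_false hd ▸ Finset.mem_image_of_mem _ (Finset.mem_univ _)

lemma dotR_e1 {d : ℕ} (hd : 0 < d) (v : Fin d → ℝ) : dotR v (e1 d) = v ⟨0, hd⟩ := by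
  rw [dotR, Finset.sum_eq_single ⟨0, hd⟩]
  · simp [e1]
  · intro i _ hi
    simp [e1, Fin.ext_iff.not.mp hi]
  · simp

lemma dotR_drift_e1 {d : ℕ} (hd : 0 < d) (ω : Env d) (x : Site d) :
    dotR (drift ω x) (e1 d) = ω x (e1 d) - ω x (-e1 d) := by
  rw [dotR_e1 hd, drift, sum_V, Fintype.sum_prod_type, Finset.sum_eq_single ⟨0, hd⟩]
  · rw [Fintype.sum_bool, signedUnit_zero_true hd, signedUnit_zero_false hd]
    simp [e1, sub_eq_add_neg]
  · intro j _ hj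
    simp [signedUnit, Ne.symm hj]
  · simp

lemma measurableSet_inOmegaEps {d : ℕ} (p₀ : Site d → ℝ) (ε : ℝ) :
    MeasurableSet {ω : Env d | InOmegaEps p₀ ε ω} := by
  unfold InOmegaEps IsEnv
  measurability

lemma two_mul_mul_le_one_of_forall_le {d : ℕ} {p₀ : Site d → ℝ} {κ : ℝ} (hsum : ∑ e ∈ V d, p₀ e = 1)
    (hκ : ∀ e ∈ V d, κ ≤ p₀ e) : 2 * d * κ ≤ 1 := by
  have := Finset.card_nsmul_le_sum (V d) p₀ κ hκ
  rw [card_V, hsum, nsmul_eq_mul] at this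
  exact_mod_cast this

namespace InOmegaEps

variable {d : ℕ} {p₀ : Site d → ℝ} {ε : ℝ} {ω : Env d}

lemma sum_mul_mem_Icc (h : InOmegaEps p₀ ε ω) (x : Site d) {g : Site d → ℝ}
    (hg : ∀ e ∈ V d, 0 ≤ g e) :
    ∑ e ∈ V d, ω x e * g e ∈
      Set.Icc (∑ e ∈ V d, (p₀ e - ε) * g e) (∑ e ∈ V d, (p₀ e + ε) * g e) := by
  constructor <;> refine Finset.sum_le_sum fun e he => mul_le_mul_of_nonneg_right ?_ (hg e he) <;>
    linarith [abs_le.mp (h.2 x e he)]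

lemma abs_dotR_drift_e1_sub_le (hd : 0 < d) (h : InOmegaEps p₀ ε ω) (x : Site d) :
    |dotR (drift ω x) (e1 d) - (p₀ (e1 d) - p₀ (-e1 d))| ≤ 2 * ε := by
  have h₁ := abs_le.mp (h.2 x _ (e1_mem_V hd))
  have h₂ := abs_le.mp (h.2 x _ (neg_e1_mem_V hd))
  rw [dotR_drift_e1 hd, abs_le]
  constructor <;> linarith [h₁.1, h₁.2, h₂.1, h₂.2]

end InOmegaEps

lemma four_mul_sq_div_sub_le {κ ε : ℝ} (hκ : 0 < κ) (hκ4 : 4 * κ ≤ 1) (hε : 0 < ε)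
    (hεκ : ε < κ / 2) : 4 * ε ^ 2 / (κ - ε) ≤ 2 / κ ^ 2 * ε ^ 2 := by
  have h : 2 * κ ^ 2 ≤ κ - ε := by nlinarith
  rw [div_le_iff₀ (by linarith)]
  calc 4 * ε ^ 2 = 2 / κ ^ 2 * ε ^ 2 * (2 * κ ^ 2) := by field_simp; ring
    _ ≤ 2 / κ ^ 2 * ε ^ 2 * (κ - ε) := by gcongr

theorem le_integral_drift_e1_div {d : ℕ} (hd : 2 ≤ d) {p₀ : Site d → ℝ}
    (hsum : ∑ e ∈ V d, p₀ e = 1) {κ ε : ℝ} (hκ : ∀ e ∈ V d, κ ≤ p₀ e) (hκ0 : 0 < κ)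
    (hε : 0 < ε) (hεκ : ε < κ / 2) {ℙ : Measure (Env d)} [IsProbabilityMeasure ℙ]
    (hΩ : ∀ᵐ ω ∂ℙ, InOmegaEps p₀ ε ω)
    (hlam : 2 / κ ^ 2 * ε ^ 2 < ∫ ω, dotR (drift ω 0) (e1 d) ∂ℙ)
    {g : Site d → ℝ} (hg : ∀ e ∈ V d, 0 ≤ g e ∧ g e ≤ 1) (hG : 0 < ∑ e ∈ V d, g e) :
    1 / (2 * (d : ℝ)) * ((∫ ω, dotR (drift ω 0) (e1 d) ∂ℙ) - 2 / κ ^ 2 * ε ^ 2) ≤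
      ∫ ω, dotR (drift ω 0) (e1 d) / (∑ e ∈ V d, ω 0 e * g e) ∂ℙ := by
  have hd0 : 0 < d := by omega
  have hdR : (2 : ℝ) ≤ d := by exact_mod_cast hd
  have hκd := two_mul_mul_le_one_of_forall_le hsum hκ
  set lam := ∫ ω, dotR (drift ω 0) (e1 d) ∂ℙ
  set G := ∑ e ∈ V d, g e
  set L := ∑ e ∈ V d, (p₀ e - ε) * g e
  set U := ∑ e ∈ V d, (p₀ e + ε) * g e
  have hLG : (κ - ε) * G ≤ L := by
    rw [Finset.mul_sum]
    exact Finset.sum_le_sum fun e he =>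
      mul_le_mul_of_nonneg_right (by linarith [hκ e he]) (hg e he).1
  have hL : 0 < L := (mul_pos (by linarith) hG).trans_le hLG
  have hUL : U - L = 2 * ε * G := by
    rw [← Finset.sum_sub_distrib, Finset.mul_sum]
    exact Finset.sum_congr rfl fun _ _ => by ring
  have hU : U ≤ 2 * d := calc
    U ≤ ∑ e ∈ V d, (p₀ e + ε) := Finset.sum_le_sum fun e he =>
        mul_le_of_le_one_right (by linarith [hκ e he]) (hg e he).2
    _ = 1 + 2 * d * ε := by
        rw [Finset.sum_add_distrib, hsum, Finset.sum_const, card_V, nsmul_eq_mul]; push_cast; ring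
    _ ≤ 2 * d := by nlinarith
  have herr : 2 * ε * (U - L) / L ≤ 2 / κ ^ 2 * ε ^ 2 := calc
    2 * ε * (U - L) / L ≤ 4 * ε ^ 2 / (κ - ε) := by
        rw [hUL, div_le_div_iff₀ hL (by linarith)]
        nlinarith
    _ ≤ 2 / κ ^ 2 * ε ^ 2 := four_mul_sq_div_sub_le hκ0 (by nlinarith) hε hεκ
  have hC : 0 ≤ 2 / κ ^ 2 * ε ^ 2 := by positivity
  have hLU : L ≤ U := by nlinarith [mul_pos hε hG]
  have hD : Measurable fun ω : Env d => dotR (drift ω 0) (e1 d) := by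
    simp only [dotR_drift_e1 hd0]; fun_prop
  have hS : Measurable fun ω : Env d => ∑ e ∈ V d, ω 0 e * g e := by fun_prop
  calc 1 / (2 * (d : ℝ)) * (lam - 2 / κ ^ 2 * ε ^ 2) ≤ (lam - 2 / κ ^ 2 * ε ^ 2) / U := by
        rw [one_div_mul_eq_div]
        exact div_le_div_of_nonneg_left (by linarith) (hL.trans_le (by linarith)) hU
    _ ≤ (lam - 2 * ε * (U - L) / L) / U := by
        gcongr
        linarith
    _ ≤ _ := le_integral_div_of_ae_bounds hD.aemeasurable hS.aemeasurable
        (hΩ.mono fun ω h => h.abs_dotR_drift_e1_sub_le hd0 0)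
        (hΩ.mono fun ω h => h.sum_mul_mem_Icc 0 fun e he => (hg e he).1) hL (by linarith)

/-- Kalikow's criterion under the quadratic local drift condition:
for `d ≥ 2`, `p₀ ∈ 𝒫₀`, `C = 2/(min_{e∈V} p₀(e))²`, `ε ∈ (0,1)` small enough, if the
i.i.d. law `ℙ` satisfies `ℙ(Ω_{p₀,ε}) = 1` and `λ := 𝔼[d(0,ω)·e₁] > C ε²`, then for every
`g : V → [0,1]` with `∑ g(e) > 0`,
`𝔼[(d(0,ω)·e₁)/(∑_e ω(0,e)g(e))] ≥ (1/(2d))(λ - Cε²) > 0`; in particular the infimum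
over such `g` is strictly positive. -/
theorem kalikow_criterion_of_quadratic_local_drift (d : ℕ) (hd : 2 ≤ d)
    (p₀ : Site d → ℝ) (hp₀ : IsPosProbVec p₀) :
    ∃ ε₀ : ℝ, 0 < ε₀ ∧ ε₀ ≤ 1 ∧
      ∀ ε : ℝ, 0 < ε → ε < ε₀ →
      ∀ ℙ : Measure (Env d),
        IsProbabilityMeasure ℙ →
        IsIID ℙ →
        ℙ {ω | InOmegaEps p₀ ε ω} = 1 →
        (∫ ω, dotR (drift ω 0) (e1 d) ∂ℙ) >
          (2 / ((V d).inf' (V_nonempty (by omega)) p₀) ^ 2) * ε ^ 2 →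
        (∀ g : Site d → ℝ, (∀ e ∈ V d, 0 ≤ g e ∧ g e ≤ 1) →
            0 < ∑ e ∈ V d, g e →
            (∫ ω, dotR (drift ω 0) (e1 d) / (∑ e ∈ V d, ω 0 e * g e) ∂ℙ) ≥
              (1 / (2 * (d : ℝ))) *
                ((∫ ω, dotR (drift ω 0) (e1 d) ∂ℙ) -
                  (2 / ((V d).inf' (V_nonempty (by omega)) p₀) ^ 2) * ε ^ 2)) ∧
        0 < (1 / (2 * (d : ℝ))) *
              ((∫ ω, dotR (drift ω 0) (e1 d) ∂ℙ) -
                (2 / ((V d).inf' (V_nonempty (by omega)) p₀) ^ 2) * ε ^ 2) ∧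
        0 < sInf {I : ℝ | ∃ g : Site d → ℝ, (∀ e ∈ V d, 0 ≤ g e ∧ g e ≤ 1) ∧
              (0 < ∑ e ∈ V d, g e) ∧
              I = ∫ ω, dotR (drift ω 0) (e1 d) / (∑ e ∈ V d, ω 0 e * g e) ∂ℙ} := by
  obtain ⟨⟨-, hsum, -⟩, hpos⟩ := hp₀
  set κ := (V d).inf' (V_nonempty (by omega)) p₀
  have hκ : ∀ e ∈ V d, κ ≤ p₀ e := fun e he => Finset.inf'_le p₀ he
  have hκ0 : 0 < κ := (Finset.lt_inf'_iff _).2 hpos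
  have hκd := two_mul_mul_le_one_of_forall_le hsum hκ
  have hdR : (2 : ℝ) ≤ d := by exact_mod_cast hd
  refine ⟨κ / 2, by positivity, by nlinarith, fun ε hε hεκ ℙ _ _ hΩ hlam => ?_⟩
  have hbound := fun g hg hG => le_integral_drift_e1_div hd hsum hκ hκ0 hε hεκ
    ((mem_ae_iff_prob_eq_one (measurableSet_inOmegaEps p₀ ε)).2 hΩ) hlam (g := g) hg hG
  have hpos : 0 < 1 / (2 * (d : ℝ)) *
      ((∫ ω, dotR (drift ω 0) (e1 d) ∂ℙ) - 2 / κ ^ 2 * ε ^ 2) :=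
    mul_pos (by positivity) (sub_pos.2 hlam)
  have hone : 0 < ∑ e ∈ V d, (1 : ℝ) := by simp [card_V]; omega
  refine ⟨hbound, hpos, hpos.trans_le (le_csInf ⟨_, 1, fun _ _ => by simp, hone, rfl⟩ ?_)⟩
  rintro _ ⟨g, hg, hG, rfl⟩
  exact hbound g hg hG

end RWRE
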